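/- Let (T1, T2) be a pair of commuting contractions on a complex Hilbert space H such that T = T1 T2 is a pure contraction, and suppose the closures of the ranges of D_{T1} and D_{T2} are finite dimensional. Then there exist a finite-dimensional complex Hilbert space E, a unitary U on E, an orthogonal projection P on E, and a linear isometry Γ : H → ℓ²(ℕ, E) such that Γ ∘ T1* = W_Φ* ∘ Γ, Γ ∘ T2* = W_Ψ* ∘ Γ, and Γ ∘ T* = S* ∘ Γ, where S is the unilateral shift on ℓ²(ℕ, E), W_Φ is the operator (W_Φ f)(0) = P U* f(0), (W_Φ f)(n) = P U* f(n) + (I−P) U* f(n−1) for n ≥ 1, and W_Ψ is the operator (W_Ψ f)(0) = U(I−P) f(0), (W_Ψ f)(n) = U(I−P) f(n) + U P f(n−1) for n ≥ 1. -/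

import Mathlib

/-!
Write `R = (T₁T₂)*` and let `d₁, d₂` be the defect maps, so `‖dᵢ g‖² = ‖g‖² - ‖Tᵢ* g‖²`.
The two maps `C g = (d₁ g, d₂ T₁* g)` and `C' g = (d₁ T₂* g, d₂ g)` into `E = 𝒟_{T₁} ⊕ 𝒟_{T₂}`
both satisfy `‖C g‖² = ‖g‖² - ‖R g‖²` by telescoping, so in the finite-dimensional space `E`
some unitary `U` carries `C'` to `C`. With `P` the projection onto `𝒟_{T₂}`, reading off
coordinates gives `C T₁* = U P C + U (1 - P) C R` and `C T₂* = (1 - P) U* C + P U* C R`.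
As `R` is pure, telescoping again makes `Γ h = (C Rⁿ h)ₙ` an isometry into `ℓ²(ℕ, E)`, and the
two identities say exactly that `Γ` intertwines `T₁*`, `T₂*`, `R` with `W_Φ*`, `W_Ψ*`, `S*`.
-/

open ContinuousLinearMap
open scoped ENNReal

set_option linter.unusedSectionVars false

noncomputable section

section ShiftOperator

variable {E : Type*} [NormedAddCommGroup E] [InnerProductSpace ℂ E]

/-- The right-shifted sequence: `(shiftFun f) 0 = 0`, `(shiftFun f) (n+1) = f n`. -/
def shiftFun (f : ℕ → E) : ℕ → E
  | 0 => 0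
  | (n + 1) => f n

lemma summable_of_lp (f : lp (fun _ : ℕ => E) 2) :
    Summable fun n => ‖(f : ∀ _ : ℕ, E) n‖ ^ (2 : ℝ) := by
  have h := lp.memℓp f
  have h2 : (0 : ℝ) < (2 : ℝ≥0∞).toReal := by norm_num
  simpa using (memℓp_gen_iff h2).mp h

lemma summable_shiftFun (f : lp (fun _ : ℕ => E) 2) :
    Summable fun n => ‖shiftFun (f : ∀ _ : ℕ, E) n‖ ^ (2 : ℝ) := by
  have h1 : Summable fun n => ‖shiftFun (f : ∀ _ : ℕ, E) (n + 1)‖ ^ (2 : ℝ) := by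
    simpa [shiftFun] using summable_of_lp f
  exact (summable_nat_add_iff
    (f := fun n => ‖shiftFun ((f : ∀ _ : ℕ, E)) n‖ ^ (2 : ℝ)) 1).mp h1

lemma memℓp_shiftFun (f : lp (fun _ : ℕ => E) 2) : Memℓp (shiftFun (f : ∀ _ : ℕ, E)) 2 := by
  apply memℓp_gen
  simpa using summable_shiftFun f

lemma norm_shift_eq (f : lp (fun _ : ℕ => E) 2)
    (g : lp (fun _ : ℕ => E) 2) (hg : (g : ∀ _ : ℕ, E) = shiftFun (f : ∀ _ : ℕ, E)) :
    ‖g‖ = ‖f‖ := by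
  have h2 : (0 : ℝ) < (2 : ℝ≥0∞).toReal := by norm_num
  rw [lp.norm_eq_tsum_rpow h2 f, lp.norm_eq_tsum_rpow h2 g]
  congr 1
  have htsum : (∑' n, ‖shiftFun (f : ∀ _ : ℕ, E) n‖ ^ (2 : ℝ)) =
      ∑' n, ‖(f : ∀ _ : ℕ, E) n‖ ^ (2 : ℝ) := by
    rw [(summable_shiftFun f).tsum_eq_zero_add]
    simp [shiftFun]
  simp only [hg]
  simpa using htsum

/-- The unilateral shift `S` on `ℓ²(ℕ, E)`: `(S f)(0) = 0` and `(S f)(n) = f (n-1)` for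
`n ≥ 1`. -/
def shiftOp (E : Type*) [NormedAddCommGroup E] [InnerProductSpace ℂ E] :
    lp (fun _ : ℕ => E) 2 →L[ℂ] lp (fun _ : ℕ => E) 2 :=
  LinearMap.mkContinuous
    { toFun := fun f => ⟨shiftFun (f : ∀ _ : ℕ, E), memℓp_shiftFun f⟩
      map_add' := by
        intro f g
        apply lp.ext
        funext n
        cases n <;> simp [shiftFun, lp.coeFn_add, Pi.add_apply] <;>
          first | exact (add_zero _).symm | rfl
      map_smul' := by
        intro c f
        apply lp.ext
        funext n
        cases n <;> simp [shiftFun, lp.coeFn_smul, Pi.smul_apply] }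
    1
    (by
      intro f
      rw [one_mul]
      exact le_of_eq (norm_shift_eq f _ rfl))

@[simp] lemma shiftOp_apply_zero (f : lp (fun _ : ℕ => E) 2) :
    (shiftOp E f : ∀ _ : ℕ, E) 0 = 0 := rfl

@[simp] lemma shiftOp_apply_succ (f : lp (fun _ : ℕ => E) 2) (n : ℕ) :
    (shiftOp E f : ∀ _ : ℕ, E) (n + 1) = (f : ∀ _ : ℕ, E) n := rfl

end ShiftOperator

section Defect

variable {H : Type*} [NormedAddCommGroup H] [InnerProductSpace ℂ H] [CompleteSpace H]

/-- The defect operator `D_T = (I - T T*)^{1/2}` of a contraction `T`. -/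
def defect (T : H →L[ℂ] H) : H →L[ℂ] H :=
  CFC.sqrt (1 - T * adjoint T)

end Defect

section DefectClosure

variable {H : Type*} [NormedAddCommGroup H] [InnerProductSpace ℂ H] [CompleteSpace H]

/-- The closure of the range of the defect operator of `T`. -/
def defectClos (T : H →L[ℂ] H) : Submodule ℂ H :=
  (LinearMap.range (defect T : H →ₗ[ℂ] H)).topologicalClosure

/-- `D_T x`, viewed as an element of the closure of the range of `D_T`. -/
def defectElem (T : H →L[ℂ] H) (x : H) : defectClos T :=
  ⟨defect T x, Submodule.le_topologicalClosure _ (LinearMap.mem_range_self (defect T : H →ₗ[ℂ] H) x)⟩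

instance (T : H →L[ℂ] H) : CompleteSpace (defectClos T) :=
  (Submodule.isClosed_topologicalClosure _).completeSpace_coe

end DefectClosure

/-- `W` is the analytic (degree-one) Toeplitz operator on `ℓ²(ℕ, E)` with symbol
`φ(z) = a + z b`, i.e. `(W f)(0) = a (f 0)` and `(W f)(n) = a (f n) + b (f (n-1))`
for `n ≥ 1`. -/
def IsToeplitz {E : Type*} [NormedAddCommGroup E] [InnerProductSpace ℂ E]
    (a b : E →L[ℂ] E)
    (W : lp (fun _ : ℕ => E) 2 →L[ℂ] lp (fun _ : ℕ => E) 2) : Prop :=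
  ∀ f : lp (fun _ : ℕ => E) 2,
    (W f : ∀ _ : ℕ, E) 0 = a ((f : ∀ _ : ℕ, E) 0) ∧
    ∀ n : ℕ, (W f : ∀ _ : ℕ, E) (n + 1) =
      a ((f : ∀ _ : ℕ, E) (n + 1)) + b ((f : ∀ _ : ℕ, E) n)

section SequenceOperators

variable {E : Type*} [NormedAddCommGroup E] [InnerProductSpace ℂ E]

def diagOp (a : E →L[ℂ] E) : lp (fun _ : ℕ => E) 2 →L[ℂ] lp (fun _ : ℕ => E) 2 :=
  LinearMap.mkContinuous
    { toFun := fun f => ⟨fun n => a (f n),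
        ((lp.memℓp f).norm.const_smul ‖a‖).mono fun n => a.le_opNorm (f n)⟩
      map_add' := fun f g => by ext n; exact map_add a (f n) (g n)
      map_smul' := fun c f => by ext; simp }
    ‖a‖
    fun f => calc
      _ ≤ ‖(‖a‖ : ℂ) • f‖ := lp.norm_mono two_ne_zero fun n => by
            rw [lp.coeFn_smul, Pi.smul_apply, norm_smul, Complex.norm_real, norm_norm]
            exact a.le_opNorm (f n)
      _ = ‖a‖ * ‖f‖ := by rw [lp.norm_const_smul two_ne_zero, Complex.norm_real, norm_norm]

@[simp] lemma diagOp_apply (a : E →L[ℂ] E) (f : lp (fun _ : ℕ => E) 2) (n : ℕ) :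
    diagOp a f n = a (f n) := rfl

lemma adjoint_diagOp [CompleteSpace E] (a : E →L[ℂ] E) :
    adjoint (diagOp a) = diagOp (adjoint a) :=
  ((eq_adjoint_iff _ _).mpr fun f g => by
    simp only [lp.inner_eq_tsum, diagOp_apply, adjoint_inner_left]).symm

lemma adjoint_shiftOp_apply [CompleteSpace E] (f : lp (fun _ : ℕ => E) 2) (n : ℕ) :
    adjoint (shiftOp E) f n = f (n + 1) := by
  refine ext_inner_right ℂ fun v => ?_
  have : shiftOp E (lp.single 2 n v) = lp.single 2 (n + 1) v := by
    ext m
    cases m <;> simp [lp.single_apply, Pi.single_apply]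
  rw [← lp.inner_single_right, adjoint_inner_left, this, lp.inner_single_right]

def toepOp (a b : E →L[ℂ] E) : lp (fun _ : ℕ => E) 2 →L[ℂ] lp (fun _ : ℕ => E) 2 :=
  diagOp a + shiftOp E ∘L diagOp b

lemma isToeplitz_toepOp (a b : E →L[ℂ] E) : IsToeplitz a b (toepOp a b) :=
  fun f => ⟨by simp [toepOp], fun n => by simp [toepOp]⟩

lemma adjoint_toepOp_apply [CompleteSpace E] (a b : E →L[ℂ] E) (f : lp (fun _ : ℕ => E) 2)
    (n : ℕ) : adjoint (toepOp a b) f n = adjoint a (f n) + adjoint b (f (n + 1)) := by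
  simp [toepOp, adjoint_comp, adjoint_diagOp, adjoint_shiftOp_apply]

end SequenceOperators

section CoefficientIsometry

open Filter Topology

variable {H E : Type*} [NormedAddCommGroup H] [InnerProductSpace ℂ H]
  [NormedAddCommGroup E] [InnerProductSpace ℂ E] {R : H →L[ℂ] H} {C : H →L[ℂ] E}

lemma hasSum_norm_sq_apply_pow (hC : ∀ g, ‖C g‖ ^ 2 = ‖g‖ ^ 2 - ‖R g‖ ^ 2)
    (hR : ∀ h, Tendsto (fun n => (R ^ n) h) atTop (𝓝 0)) (h : H) :
    HasSum (fun n => ‖C ((R ^ n) h)‖ ^ 2) (‖h‖ ^ 2) := by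
  have htel : ∀ n, ‖C ((R ^ n) h)‖ ^ 2 = ‖(R ^ n) h‖ ^ 2 - ‖(R ^ (n + 1)) h‖ ^ 2 := fun n => by
    rw [hC, pow_succ' R n]; rfl
  rw [hasSum_iff_tendsto_nat_of_nonneg fun n => by positivity]
  simp only [htel, Finset.sum_range_sub', pow_zero]
  simpa using tendsto_const_nhds.sub ((hR h).norm.pow 2)

lemma memℓp_apply_pow (hC : ∀ g, ‖C g‖ ^ 2 = ‖g‖ ^ 2 - ‖R g‖ ^ 2)
    (hR : ∀ h, Tendsto (fun n => (R ^ n) h) atTop (𝓝 0)) (h : H) :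
    Memℓp (fun n => C ((R ^ n) h)) 2 :=
  memℓp_gen <| by
    simpa only [ENNReal.toReal_ofNat, Real.rpow_two] using
      (hasSum_norm_sq_apply_pow hC hR h).summable

def coeffIsometry (hC : ∀ g, ‖C g‖ ^ 2 = ‖g‖ ^ 2 - ‖R g‖ ^ 2)
    (hR : ∀ h, Tendsto (fun n => (R ^ n) h) atTop (𝓝 0)) : H →ₗᵢ[ℂ] lp (fun _ : ℕ => E) 2 where
  toFun h := ⟨fun n => C ((R ^ n) h), memℓp_apply_pow hC hR h⟩
  map_add' g h := by ext n; exact (congrArg C (map_add _ g h)).trans (map_add C _ _)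
  map_smul' c h := by ext n; simp
  norm_map' h := by
    have hnorm := lp.hasSum_norm (E := fun _ : ℕ => E) (p := 2) (by norm_num)
      ⟨_, memℓp_apply_pow hC hR h⟩
    simp only [ENNReal.toReal_ofNat, Real.rpow_two] at hnorm
    exact (sq_eq_sq₀ (norm_nonneg _) (norm_nonneg _)).mp
      (hnorm.unique (hasSum_norm_sq_apply_pow hC hR h))

@[simp] lemma coeffIsometry_apply (hC : ∀ g, ‖C g‖ ^ 2 = ‖g‖ ^ 2 - ‖R g‖ ^ 2)
    (hR : ∀ h, Tendsto (fun n => (R ^ n) h) atTop (𝓝 0)) (h : H) (n : ℕ) :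
    coeffIsometry hC hR h n = C ((R ^ n) h) := rfl

variable [CompleteSpace E]

lemma coeffIsometry_comp_eq_adjoint_shiftOp (hC : ∀ g, ‖C g‖ ^ 2 = ‖g‖ ^ 2 - ‖R g‖ ^ 2)
    (hR : ∀ h, Tendsto (fun n => (R ^ n) h) atTop (𝓝 0)) :
    (coeffIsometry hC hR).toContinuousLinearMap ∘L R =
      adjoint (shiftOp E) ∘L (coeffIsometry hC hR).toContinuousLinearMap := by
  ext h n
  simp [adjoint_shiftOp_apply, pow_succ]

lemma coeffIsometry_comp_eq_adjoint_toepOp (hC : ∀ g, ‖C g‖ ^ 2 = ‖g‖ ^ 2 - ‖R g‖ ^ 2)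
    (hR : ∀ h, Tendsto (fun n => (R ^ n) h) atTop (𝓝 0)) {R' : H →L[ℂ] H} (hRR' : Commute R R')
    {a b : E →L[ℂ] E} (hCR' : ∀ g, C (R' g) = adjoint a (C g) + adjoint b (C (R g))) :
    (coeffIsometry hC hR).toContinuousLinearMap ∘L R' =
      adjoint (toepOp a b) ∘L (coeffIsometry hC hR).toContinuousLinearMap := by
  ext h n
  have hcomm : (R ^ n) (R' h) = R' ((R ^ n) h) := congr($((hRR'.pow_left n).eq) h)
  simp [adjoint_toepOp_apply, hcomm, hCR', pow_succ']

end CoefficientIsometry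

lemma CStarAlgebra.one_sub_mul_star_nonneg {A : Type*} [CStarAlgebra A] [PartialOrder A]
    [StarOrderedRing A] {a : A} (ha : ‖a‖ ≤ 1) : 0 ≤ 1 - a * star a := by
  rw [sub_nonneg, ← CStarAlgebra.norm_le_one_iff_of_nonneg _ (mul_star_self_nonneg a),
    CStarRing.norm_self_mul_star]
  exact mul_le_one₀ ha (norm_nonneg a) ha

section DefectMaps

variable {H : Type*} [NormedAddCommGroup H] [InnerProductSpace ℂ H] [CompleteSpace H]
  {T : H →L[ℂ] H}

lemma norm_defect_apply_sq (hT : ‖T‖ ≤ 1) (g : H) :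
    ‖defect T g‖ ^ 2 = ‖g‖ ^ 2 - ‖adjoint T g‖ ^ 2 := by
  have hD : adjoint (defect T) ∘L defect T = 1 - T * adjoint T := by
    rw [← star_eq_adjoint, (IsSelfAdjoint.of_nonneg (CFC.sqrt_nonneg _)).star_eq]
    exact CFC.sqrt_mul_sqrt_self _ (CStarAlgebra.one_sub_mul_star_nonneg hT)
  have hT' : adjoint (adjoint T) ∘L adjoint T = T * adjoint T := by rw [adjoint_adjoint]; rfl
  rw [apply_norm_sq_eq_inner_adjoint_left, hD, apply_norm_sq_eq_inner_adjoint_left, hT',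
    sub_apply, one_apply_eq_self, inner_sub_left, map_sub, inner_self_eq_norm_sq]

-- Transported to a Euclidean space so that the model space of the theorem lives in `Type`.
lemma exists_euclidean_defect_map (hT : ‖T‖ ≤ 1) [FiniteDimensional ℂ (defectClos T)] :
    ∃ (n : ℕ) (d : H →L[ℂ] EuclideanSpace ℂ (Fin n)),
      ∀ g, ‖d g‖ ^ 2 = ‖g‖ ^ 2 - ‖adjoint T g‖ ^ 2 :=
  ⟨_, (stdOrthonormalBasis ℂ (defectClos T)).repr.toLinearIsometry.toContinuousLinearMap ∘L
      (defect T).codRestrict _ fun g => (defectElem T g).2,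
    fun g => by
      rw [comp_apply, LinearIsometry.coe_toContinuousLinearMap,
        LinearIsometryEquiv.coe_toLinearIsometry, LinearIsometryEquiv.norm_map]
      exact norm_defect_apply_sq hT g⟩

end DefectMaps

lemma exists_linearIsometryEquiv_apply_eq_of_norm_eq {𝕜 V F : Type*} [RCLike 𝕜]
    [AddCommGroup V] [Module 𝕜 V] [NormedAddCommGroup F] [InnerProductSpace 𝕜 F]
    [FiniteDimensional 𝕜 F]
    (A B : V →ₗ[𝕜] F) (hAB : ∀ v, ‖A v‖ = ‖B v‖) :
    ∃ X : F ≃ₗᵢ[𝕜] F, ∀ v, X (A v) = B v := by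
  have hker : LinearMap.ker A = LinearMap.ker B := by
    ext v
    rw [LinearMap.mem_ker, LinearMap.mem_ker, ← norm_eq_zero, hAB, norm_eq_zero]
  let φ := A.quotKerEquivRange.symm ≪≫ₗ Submodule.quotEquivOfEq _ _ hker ≪≫ₗ B.quotKerEquivRange
  have hφ : ∀ v, (φ ⟨A v, LinearMap.mem_range_self A v⟩ : F) = B v := fun v => by
    simp [φ, LinearMap.quotKerEquivRange_symm_apply_image]
  let ι : LinearMap.range A →ₗᵢ[𝕜] F :=
    { toLinearMap := (LinearMap.range B).subtype ∘ₗ φ.toLinearMap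
      norm_map' := by
        rintro ⟨_, v, rfl⟩
        simp [hφ, hAB] }
  exact ⟨ι.extend.toLinearIsometryEquiv rfl, fun v =>
    (ι.extend_apply ⟨A v, LinearMap.mem_range_self A v⟩).trans (hφ v)⟩

section ProductModel

variable {E₁ E₂ : Type*} [NormedAddCommGroup E₁] [InnerProductSpace ℂ E₁]
  [NormedAddCommGroup E₂] [InnerProductSpace ℂ E₂]

variable (E₁ E₂) in
def sndProj : WithLp 2 (E₁ × E₂) →L[ℂ] WithLp 2 (E₁ × E₂) :=
  (WithLp.prodContinuousLinearEquiv 2 ℂ E₁ E₂).symm.toContinuousLinearMap ∘L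
    (ContinuousLinearMap.inr ℂ E₁ E₂ ∘L ContinuousLinearMap.snd ℂ E₁ E₂) ∘L
    (WithLp.prodContinuousLinearEquiv 2 ℂ E₁ E₂).toContinuousLinearMap

lemma sndProj_apply (x : WithLp 2 (E₁ × E₂)) : sndProj E₁ E₂ x = WithLp.toLp 2 (0, x.snd) := rfl

lemma sndProj_mul_self : sndProj E₁ E₂ * sndProj E₁ E₂ = sndProj E₁ E₂ := rfl

lemma isSelfAdjoint_sndProj [CompleteSpace E₁] [CompleteSpace E₂] :
    IsSelfAdjoint (sndProj E₁ E₂) :=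
  isSelfAdjoint_iff_isSymmetric.mpr fun x y => by simp [sndProj_apply]

lemma one_sub_sndProj_add_sndProj (x y : WithLp 2 (E₁ × E₂)) :
    (1 - sndProj E₁ E₂) x + sndProj E₁ E₂ y = WithLp.toLp 2 (x.fst, y.snd) := by
  rw [WithLp.ext_iff]
  ext <;> simp [sndProj_apply]

theorem exists_unitary_bcl_coeffMap [CompleteSpace E₁] [CompleteSpace E₂]
    [FiniteDimensional ℂ E₁] [FiniteDimensional ℂ E₂]
    {H : Type*} [NormedAddCommGroup H] [InnerProductSpace ℂ H]
    {S₁ S₂ : H →L[ℂ] H} (hS : Commute S₁ S₂) {d₁ : H →L[ℂ] E₁} {d₂ : H →L[ℂ] E₂}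
    (hd₁ : ∀ g, ‖d₁ g‖ ^ 2 = ‖g‖ ^ 2 - ‖S₁ g‖ ^ 2)
    (hd₂ : ∀ g, ‖d₂ g‖ ^ 2 = ‖g‖ ^ 2 - ‖S₂ g‖ ^ 2) :
    ∃ U ∈ unitary (WithLp 2 (E₁ × E₂) →L[ℂ] WithLp 2 (E₁ × E₂)),
    ∃ C : H →L[ℂ] WithLp 2 (E₁ × E₂),
      (∀ g, ‖C g‖ ^ 2 = ‖g‖ ^ 2 - ‖(S₂ * S₁) g‖ ^ 2) ∧
      (∀ g, C (S₁ g) = U (sndProj E₁ E₂ (C g)) + U ((1 - sndProj E₁ E₂) (C ((S₂ * S₁) g)))) ∧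
      (∀ g, C (S₂ g) =
        (1 - sndProj E₁ E₂) (adjoint U (C g)) + sndProj E₁ E₂ (adjoint U (C ((S₂ * S₁) g)))) := by
  let toLp := (WithLp.prodContinuousLinearEquiv 2 ℂ E₁ E₂).symm.toContinuousLinearMap
  let C := toLp ∘L d₁.prod (d₂ ∘L S₁)
  let C' := toLp ∘L (d₁ ∘L S₂).prod d₂
  have hR₁ : ∀ g, (S₂ * S₁) g = S₂ (S₁ g) := fun _ => rfl
  have hR₂ : ∀ g, (S₂ * S₁) g = S₁ (S₂ g) := fun g => by rw [← hS.eq]; rfl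
  have hC : ∀ g, ‖C g‖ ^ 2 = ‖g‖ ^ 2 - ‖(S₂ * S₁) g‖ ^ 2 := fun g => by
    rw [WithLp.prod_norm_sq_eq_of_L2]
    change ‖d₁ g‖ ^ 2 + ‖d₂ (S₁ g)‖ ^ 2 = _
    rw [hd₁, hd₂, hR₁]
    ring
  have hC' : ∀ g, ‖C' g‖ ^ 2 = ‖g‖ ^ 2 - ‖(S₂ * S₁) g‖ ^ 2 := fun g => by
    rw [WithLp.prod_norm_sq_eq_of_L2]
    change ‖d₁ (S₂ g)‖ ^ 2 + ‖d₂ g‖ ^ 2 = _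
    rw [hd₁, hd₂, hR₂]
    ring
  obtain ⟨X, hX⟩ := exists_linearIsometryEquiv_apply_eq_of_norm_eq C'.toLinearMap C.toLinearMap
    fun g => (sq_eq_sq₀ (norm_nonneg _) (norm_nonneg _)).mp ((hC' g).trans (hC g).symm)
  let U := Unitary.linearIsometryEquiv.symm X
  have hUC : ∀ g, (U : _ →L[ℂ] _) (C' g) = C g := hX
  have hU'C : ∀ g, adjoint (U : _ →L[ℂ] _) (C g) = C' g := fun g => by
    rw [← hUC]
    exact congr($(Unitary.star_mul_self_of_mem U.2) (C' g))
  -- `C' (S₁ g)` has the first coordinate of `C (S₂ S₁ g)` and the second of `C g`, while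
  -- `C (S₂ g)` has the first coordinate of `C' g` and the second of `C' (S₁ S₂ g)`.
  refine ⟨U, U.2, C, hC, fun g => ?_, fun g => ?_⟩
  · rw [← map_add, add_comm, one_sub_sndProj_add_sndProj, ← hUC]
    rfl
  · rw [hU'C, hU'C, one_sub_sndProj_add_sndProj, hR₂]
    rfl

end ProductModel

/-- A pure pair of commuting contractions with finite-dimensional defect spaces dilates to
a pure pair of commuting isometries: there exist a finite-dimensional Hilbert space `E`, a
unitary `U` and a projection `P` on `E`, and an isometry `Γ : H → ℓ²(ℕ, E)` intertwining
`T₁*, T₂*, (T₁T₂)*` with the adjoints of the Berger–Coburn–Lebow isometries `W_Φ, W_Ψ`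
and of the shift `S`. -/
theorem pure_pair_dilates_to_pure_isometries_findim
    {H : Type*} [NormedAddCommGroup H] [InnerProductSpace ℂ H] [CompleteSpace H]
    (T₁ T₂ : H →L[ℂ] H) (hT₁ : ‖T₁‖ ≤ 1) (hT₂ : ‖T₂‖ ≤ 1) (hcomm : Commute T₁ T₂)
    (hpure : ∀ h : H,
      Filter.Tendsto (fun n : ℕ => ((adjoint (T₁ * T₂)) ^ n) h) Filter.atTop (nhds 0))
    (hfd₁ : FiniteDimensional ℂ ↥(defectClos T₁))
    (hfd₂ : FiniteDimensional ℂ ↥(defectClos T₂)) :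
    ∃ (E : Type) (_ : NormedAddCommGroup E) (_ : InnerProductSpace ℂ E)
      (_ : CompleteSpace E) (_ : FiniteDimensional ℂ E) (U P : E →L[ℂ] E),
      (adjoint U * U = 1 ∧ U * adjoint U = 1) ∧
      (IsSelfAdjoint P ∧ P * P = P) ∧
      ∃ (WΦ WΨ : lp (fun _ : ℕ => E) 2 →L[ℂ] lp (fun _ : ℕ => E) 2)
        (Γ : H →L[ℂ] lp (fun _ : ℕ => E) 2),
        IsToeplitz (P ∘L adjoint U) ((1 - P) ∘L adjoint U) WΦ ∧
        IsToeplitz (U ∘L (1 - P)) (U ∘L P) WΨ ∧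
        Isometry Γ ∧
        Γ ∘L adjoint T₁ = adjoint WΦ ∘L Γ ∧
        Γ ∘L adjoint T₂ = adjoint WΨ ∘L Γ ∧
        Γ ∘L adjoint (T₁ * T₂) = adjoint (shiftOp E) ∘L Γ := by
  obtain ⟨n₁, d₁, hd₁⟩ := exists_euclidean_defect_map hT₁
  obtain ⟨n₂, d₂, hd₂⟩ := exists_euclidean_defect_map hT₂
  obtain ⟨U, hU, C, hC, hC₁, hC₂⟩ :=
    exists_unitary_bcl_coeffMap (S₁ := adjoint T₁) (S₂ := adjoint T₂) hcomm.star_star hd₁ hd₂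
  have hR : adjoint T₂ * adjoint T₁ = adjoint (T₁ * T₂) := (star_mul T₁ T₂).symm
  rw [hR] at hC hC₁ hC₂
  have hR₁ : Commute (adjoint (T₁ * T₂)) (adjoint T₁) :=
    ((Commute.refl T₁).mul_left hcomm.symm).star_star
  have hR₂ : Commute (adjoint (T₁ * T₂)) (adjoint T₂) :=
    (hcomm.mul_left (Commute.refl T₂)).star_star
  have hP := isSelfAdjoint_sndProj (E₁ := EuclideanSpace ℂ (Fin n₁))
    (E₂ := EuclideanSpace ℂ (Fin n₂))
  let Γ := coeffIsometry hC hpure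
  refine ⟨_, inferInstance, inferInstance, inferInstance, inferInstance, U, sndProj _ _,
    Unitary.mem_iff.mp hU, ⟨hP, sndProj_mul_self⟩, _, _, Γ.toContinuousLinearMap,
    isToeplitz_toepOp _ _, isToeplitz_toepOp _ _, Γ.isometry,
    coeffIsometry_comp_eq_adjoint_toepOp hC hpure hR₁ fun g => ?_,
    coeffIsometry_comp_eq_adjoint_toepOp hC hpure hR₂ fun g => ?_,
    coeffIsometry_comp_eq_adjoint_shiftOp hC hpure⟩
  · simp only [adjoint_comp, adjoint_adjoint, map_sub, adjoint_one, hP.adjoint_eq]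
    exact hC₁ g
  · simp only [adjoint_comp, map_sub, adjoint_one, hP.adjoint_eq]
    exact hC₂ g
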